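/- Let π : X → Y be a factor map of G systems X = (X, T, μ_X) and Y = (Y, S, μ_Y). In the Hilbert space L²(X, μ_X), let P_{KX} denote the orthogonal projection onto the closed linear span of the almost periodic functions of X, let P_Y denote the orthogonal projection onto the closed subspace {g ∘ π : g ∈ L²(Y, μ_Y)}, and let P_{KY} denote the orthogonal projection onto the closed linear span of {g ∘ π : g ∈ L²(Y, μ_Y) almost periodic for Y}. Then ⟨P_{KX} f, P_Y h⟩ = ⟨P_{KY} f, P_{KY} h⟩ for all f, h ∈ L²(X, μ_X). (This expresses that the relatively independent joining of the Kronecker factor of X with Y over the Kronecker factor of Y is a factor of X.) -/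

import Mathlib

open MeasureTheory Filter Topology

section Defs

variable {G : Type*} [Group G] {X Y : Type*} [MeasurableSpace X] [MeasurableSpace Y]

/-- A joining of two `G` systems: a probability measure on the product which is invariant
under the diagonal action and has the two given measures as marginals. -/
def IsJoining (T : G → X → X) (S : G → Y → Y) (μX : Measure X) (μY : Measure Y)
    (ν : Measure (X × Y)) : Prop :=
  IsProbabilityMeasure ν ∧
    (∀ g : G, MeasurePreserving (fun p : X × Y => (T g p.1, S g p.2)) ν ν) ∧
    ν.map Prod.fst = μX ∧ ν.map Prod.snd = μY

/-- `f ∈ L²(X, μ)` is almost periodic if the orbit `{f ∘ T^g : g ∈ G}` has compact closure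
in the norm topology of `L²(X, μ)`. -/
def AlmostPeriodic (T : G → X → X) (μ : Measure X) (f : Lp ℂ 2 μ) : Prop :=
  IsCompact (closure {h : Lp ℂ 2 μ | ∃ g : G, (h : X → ℂ) =ᵐ[μ] fun x => f (T g x)})

/-- The joining `ν` projects to the product measure on the product of the Kronecker factors:
almost periodic functions of the two systems are uncorrelated under `ν`. -/
def ProjectsToKroneckerProduct (T : G → X → X) (S : G → Y → Y) (μX : Measure X)
    (μY : Measure Y) (ν : Measure (X × Y)) : Prop :=
  ∀ (f : Lp ℂ 2 μX) (h : Lp ℂ 2 μY), AlmostPeriodic T μX f → AlmostPeriodic S μY h →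
    ∫ p, f p.1 * h p.2 ∂ν = (∫ x, f x ∂μX) * (∫ y, h y ∂μY)

/-- Two `G` systems are quasi-disjoint if the only joining projecting to the product measure
on the product of the Kronecker factors is the product measure. -/
def QuasiDisjoint (T : G → X → X) (S : G → Y → Y) (μX : Measure X) (μY : Measure Y) : Prop :=
  ∀ ν : Measure (X × Y), IsJoining T S μX μY ν →
    ProjectsToKroneckerProduct T S μX μY ν → ν = μX.prod μY

/-- Two `G` systems are disjoint if the product measure is their only joining. -/
def DisjointSystems (T : G → X → X) (S : G → Y → Y) (μX : Measure X) (μY : Measure Y) : Prop :=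
  ∀ ν : Measure (X × Y), IsJoining T S μX μY ν → ν = μX.prod μY

/-- Two `G` systems are Kronecker disjoint if every joining projects to the product measure
on the product of the Kronecker factors. -/
def KroneckerDisjoint (T : G → X → X) (S : G → Y → Y) (μX : Measure X) (μY : Measure Y) :
    Prop :=
  ∀ ν : Measure (X × Y), IsJoining T S μX μY ν → ProjectsToKroneckerProduct T S μX μY ν

/-- A separating sieve for the system `(X, T, μ)`. -/
def HasSeparatingSieve (T : G → X → X) (μ : Measure X) : Prop :=
  ∃ A : ℕ → Set X, (∀ n, MeasurableSet (A n)) ∧ (∀ n, 0 < μ (A n)) ∧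
    Tendsto (fun n => μ (A n)) atTop (𝓝 0) ∧
    ∃ X' : Set X, μ X'ᶜ = 0 ∧
      ∀ x ∈ X', ∀ x' ∈ X', (∀ n : ℕ, ∃ g : G, T g x ∈ A n ∧ T g x' ∈ A n) → x = x'

/-- A factor map of `G` systems: a measurable, almost everywhere `G`-equivariant map
pushing `μX` forward to `μY`. -/
def IsFactorMap (T : G → X → X) (S : G → Y → Y) (μX : Measure X) (μY : Measure Y)
    (π : X → Y) : Prop :=
  Measurable π ∧ μX.map π = μY ∧ ∀ g : G, ∀ᵐ x ∂μX, π (T g x) = S g (π x)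

/-- Ergodicity of a `G` system: every invariant Borel set is null or conull. -/
def ErgodicSystem (T : G → X → X) (μ : Measure X) : Prop :=
  ∀ A : Set X, MeasurableSet A → (∀ g : G, T g ⁻¹' A = A) → μ A = 0 ∨ μ A = 1

end Defs

/-- `p` is the orthogonal projection of `f` onto the (closed) subspace given by the set `K`. -/
def IsOrthogonalProjectionOnto {E : Type*} [NormedAddCommGroup E] [InnerProductSpace ℂ E]
    (K : Set E) (f p : E) : Prop :=
  p ∈ K ∧ ∀ v ∈ K, (inner ℂ (f - p) v : ℂ) = 0

/-! Let `V = π^* L²(Y)`. It is a closed subspace of `L²(X)` invariant under the Koopman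
operators of all `g ∈ G`; since these are unitary, the projection `P_V` commutes with them and
therefore maps almost periodic functions to almost periodic functions. An almost periodic function
lying in `V` is the pullback of an almost periodic function of `Y`, so `P_V` maps the Kronecker
subspace `K_X` into `K_Y ⊆ K_X ∩ V`. Hence `P_{K_Y} = P_V P_{K_X}`, and
`⟨P_{K_X} f, P_V h⟩ = ⟨P_V P_{K_X} f, h⟩ = ⟨P_{K_Y} f, h⟩ = ⟨P_{K_Y} f, P_{K_Y} h⟩`. -/

theorem Submodule.mapsTo_topologicalClosure_span {R M N : Type*} [Semiring R] [TopologicalSpace R]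
    [AddCommMonoid M] [Module R M] [TopologicalSpace M] [ContinuousAdd M] [ContinuousSMul R M]
    [AddCommMonoid N] [Module R N] [TopologicalSpace N] [ContinuousAdd N] [ContinuousSMul R N]
    (A : M →L[R] N) {s : Set M} {t : Set N} (h : Set.MapsTo A s t) :
    Set.MapsTo A (span R s).topologicalClosure (span R t).topologicalClosure := fun x hx =>
  topologicalClosure_mono (by rw [map_span]; exact span_mono (Set.image_subset_iff.2 h))
    (topologicalClosure_map A _ ⟨x, hx, rfl⟩)

theorem IsOrthogonalProjectionOnto.starProjection_eq {E : Type*} [NormedAddCommGroup E]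
    [InnerProductSpace ℂ E] {K : Submodule ℂ E} [K.HasOrthogonalProjection] {f p : E}
    (h : IsOrthogonalProjectionOnto (K : Set E) f p) : K.starProjection f = p :=
  Submodule.eq_starProjection_of_mem_of_inner_eq_zero h.1 h.2

section Projection

variable {𝕜 E : Type*} [RCLike 𝕜] [NormedAddCommGroup E] [InnerProductSpace 𝕜 E]

local notation "⟪" x ", " y "⟫" => inner 𝕜 x y

theorem Submodule.starProjection_comm_of_mapsTo (K : Submodule 𝕜 E) [K.HasOrthogonalProjection]
    {U V : E →ₗᵢ[𝕜] E} (hUV : ∀ x, U (V x) = x) (hU : Set.MapsTo U K K)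
    (hV : Set.MapsTo V K K) (x : E) :
    K.starProjection (U x) = U (K.starProjection x) := by
  refine Submodule.eq_starProjection_of_mem_of_inner_eq_zero (hU (K.starProjection_apply_mem x))
    fun w hw => ?_
  calc ⟪U x - U (K.starProjection x), w⟫ = ⟪U (x - K.starProjection x), U (V w)⟫ := by
        rw [map_sub, hUV]
    _ = ⟪x - K.starProjection x, V w⟫ := U.inner_map_map _ _
    _ = 0 := Submodule.starProjection_inner_eq_zero x _ (hV hw)

variable {K L M : Submodule 𝕜 E} [K.HasOrthogonalProjection] [L.HasOrthogonalProjection]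
  [M.HasOrthogonalProjection]

theorem Submodule.starProjection_eq_starProjection_starProjection (hMK : M ≤ K) (hML : M ≤ L)
    (hKL : Set.MapsTo L.starProjection K M) (f : E) :
    M.starProjection f = L.starProjection (K.starProjection f) := by
  have hmem : L.starProjection (K.starProjection f) ∈ M := hKL (K.starProjection_apply_mem f)
  calc M.starProjection f = M.starProjection (L.starProjection (K.starProjection f)) := by
        rw [← ContinuousLinearMap.comp_apply, starProjection_comp_starProjection_of_le hML,
          ← ContinuousLinearMap.comp_apply, starProjection_comp_starProjection_of_le hMK]
    _ = L.starProjection (K.starProjection f) := Submodule.starProjection_eq_self_iff.mpr hmem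

theorem Submodule.inner_starProjection_starProjection_eq (hMK : M ≤ K) (hML : M ≤ L)
    (hKL : Set.MapsTo L.starProjection K M) (f h : E) :
    ⟪K.starProjection f, L.starProjection h⟫ = ⟪M.starProjection f, M.starProjection h⟫ := by
  rw [← L.inner_starProjection_left_eq_right,
    ← Submodule.starProjection_eq_starProjection_starProjection hMK hML hKL,
    ← M.inner_starProjection_left_eq_right,
    Submodule.starProjection_eq_self_iff.mpr (M.starProjection_apply_mem f)]

end Projection

theorem MeasureTheory.Lp.compMeasurePreserving_eq_iff {α β E : Type*} [MeasurableSpace α]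
    [MeasurableSpace β] [NormedAddCommGroup E] {p : ENNReal} {μ : Measure α} {ν : Measure β}
    {f : α → β} (hf : MeasurePreserving f μ ν) (v : Lp E p ν) (u : Lp E p μ) :
    Lp.compMeasurePreserving f hf v = u ↔ ⇑u =ᵐ[μ] fun x => v (f x) :=
  ⟨fun h => h ▸ Lp.coeFn_compMeasurePreserving v hf,
    fun h => Lp.ext ((Lp.coeFn_compMeasurePreserving v hf).trans h.symm)⟩

section AlmostPeriodic

variable {G X Y : Type*} [MeasurableSpace X] [MeasurableSpace Y]
  {μ : Measure X} {ν : Measure Y} {T : G → X → X} {S : G → Y → Y}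

noncomputable def koopman (T : G → X → X) (hT : ∀ g, MeasurePreserving (T g) μ μ) (g : G) :
    Lp ℂ 2 μ →ₗᵢ[ℂ] Lp ℂ 2 μ :=
  Lp.compMeasurePreservingₗᵢ ℂ (T g) (hT g)

theorem koopman_apply (hT : ∀ g, MeasurePreserving (T g) μ μ) (g : G) (f : Lp ℂ 2 μ) :
    koopman T hT g f = Lp.compMeasurePreserving (T g) (hT g) f :=
  rfl

theorem koopman_eq_iff (hT : ∀ g, MeasurePreserving (T g) μ μ) (g : G) (f u : Lp ℂ 2 μ) :
    koopman T hT g f = u ↔ ⇑u =ᵐ[μ] fun x => f (T g x) :=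
  Lp.compMeasurePreserving_eq_iff (hT g) f u

theorem koopman_koopman_inv [Group G] (hT1 : ∀ x, T 1 x = x)
    (hTmul : ∀ g h x, T (g * h) x = T g (T h x)) (hT : ∀ g, MeasurePreserving (T g) μ μ)
    (g : G) (f : Lp ℂ 2 μ) :
    koopman T hT g (koopman T hT g⁻¹ f) = f := by
  rw [koopman_apply, koopman_apply, ← Lp.compMeasurePreserving_comp_apply]
  convert Lp.compMeasurePreserving_id_apply f
  exact funext fun x => by simp [← hTmul, hT1]

theorem almostPeriodic_iff (hT : ∀ g, MeasurePreserving (T g) μ μ) (f : Lp ℂ 2 μ) :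
    AlmostPeriodic T μ f ↔ IsCompact (closure (Set.range fun g => koopman T hT g f)) := by
  have horbit : {u : Lp ℂ 2 μ | ∃ g : G, ⇑u =ᵐ[μ] fun x => f (T g x)} =
      Set.range fun g => koopman T hT g f := by
    ext u
    simp only [Set.mem_ofPred_eq, Set.mem_range, koopman_eq_iff]
  rw [AlmostPeriodic, horbit]

variable {hT : ∀ g, MeasurePreserving (T g) μ μ} {hS : ∀ g, MeasurePreserving (S g) ν ν}
  {A : Lp ℂ 2 μ → Lp ℂ 2 ν}

theorem range_koopman_map (hA : ∀ g f, A (koopman T hT g f) = koopman S hS g (A f))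
    (f : Lp ℂ 2 μ) :
    (Set.range fun g => koopman S hS g (A f)) = A '' Set.range fun g => koopman T hT g f := by
  simp_rw [← hA]
  exact Set.range_comp A _

theorem AlmostPeriodic.map (hAcont : Continuous A)
    (hA : ∀ g f, A (koopman T hT g f) = koopman S hS g (A f)) {f : Lp ℂ 2 μ}
    (hf : AlmostPeriodic T μ f) : AlmostPeriodic S ν (A f) := by
  rw [almostPeriodic_iff hT] at hf
  rw [almostPeriodic_iff hS, range_koopman_map hA]
  exact (hf.image hAcont).closure_of_subset (Set.image_mono subset_closure)

theorem almostPeriodic_map_iff (hAemb : Topology.IsClosedEmbedding A)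
    (hA : ∀ g f, A (koopman T hT g f) = koopman S hS g (A f)) (f : Lp ℂ 2 μ) :
    AlmostPeriodic S ν (A f) ↔ AlmostPeriodic T μ f := by
  rw [almostPeriodic_iff hT, almostPeriodic_iff hS, range_koopman_map hA,
    hAemb.closure_image_eq, ← hAemb.isEmbedding.isCompact_iff]

end AlmostPeriodic

instance LinearIsometry.hasOrthogonalProjection_range {𝕜 E F : Type*} [RCLike 𝕜]
    [NormedAddCommGroup E] [InnerProductSpace 𝕜 E] [CompleteSpace E] [NormedAddCommGroup F]
    [InnerProductSpace 𝕜 F] (f : E →ₗᵢ[𝕜] F) :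
    (LinearMap.range f.toLinearMap).HasOrthogonalProjection := by
  have : IsComplete (LinearMap.range f.toLinearMap : Set F) := by
    rw [LinearMap.coe_range]
    exact f.isometry.isUniformInducing.isComplete_range
  have : CompleteSpace (LinearMap.range f.toLinearMap) := this.completeSpace_coe
  infer_instance

namespace IsFactorMap

variable {G X Y : Type*} [MeasurableSpace X] [MeasurableSpace Y]
  {μ : Measure X} {ν : Measure Y} {T : G → X → X} {S : G → Y → Y} {π : X → Y}

theorem measurePreserving (hπ : IsFactorMap T S μ ν π) : MeasurePreserving π μ ν :=
  ⟨hπ.1, hπ.2.1⟩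

noncomputable def pullback (hπ : IsFactorMap T S μ ν π) : Lp ℂ 2 ν →ₗᵢ[ℂ] Lp ℂ 2 μ :=
  Lp.compMeasurePreservingₗᵢ ℂ π hπ.measurePreserving

theorem pullback_eq_iff (hπ : IsFactorMap T S μ ν π) (v : Lp ℂ 2 ν) (u : Lp ℂ 2 μ) :
    hπ.pullback v = u ↔ ⇑u =ᵐ[μ] fun x => v (π x) :=
  Lp.compMeasurePreserving_eq_iff hπ.measurePreserving v u

variable (hπ : IsFactorMap T S μ ν π)
  (hT : ∀ g, MeasurePreserving (T g) μ μ) (hS : ∀ g, MeasurePreserving (S g) ν ν)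

theorem pullback_koopman (g : G) (v : Lp ℂ 2 ν) :
    hπ.pullback (koopman S hS g v) = koopman T hT g (hπ.pullback v) := by
  have hπ' := hπ.measurePreserving
  rw [eq_comm, koopman_eq_iff]
  calc ⇑(hπ.pullback (koopman S hS g v)) =ᵐ[μ] fun x => koopman S hS g v (π x) :=
        Lp.coeFn_compMeasurePreserving _ hπ'
    _ =ᵐ[μ] fun x => v (S g (π x)) :=
        hπ'.quasiMeasurePreserving.ae_eq_comp (Lp.coeFn_compMeasurePreserving v (hS g))
    _ =ᵐ[μ] fun x => v (π (T g x)) := by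
        filter_upwards [hπ.2.2 g] with x hx
        rw [hx]
    _ =ᵐ[μ] fun x => hπ.pullback v (T g x) :=
        (hT g).quasiMeasurePreserving.ae_eq_comp (Lp.coeFn_compMeasurePreserving v hπ').symm

variable [Group G] (hT1 : ∀ x, T 1 x = x) (hTmul : ∀ g h x, T (g * h) x = T g (T h x))
include hT hS hT1 hTmul

theorem starProjection_koopman (g : G) (u : Lp ℂ 2 μ) :
    hπ.pullback.toLinearMap.range.starProjection (koopman T hT g u) =
      koopman T hT g (hπ.pullback.toLinearMap.range.starProjection u) := by
  have hmaps (g : G) :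
      Set.MapsTo (koopman T hT g) hπ.pullback.toLinearMap.range hπ.pullback.toLinearMap.range := by
    rintro _ ⟨v, rfl⟩
    exact ⟨koopman S hS g v, pullback_koopman hπ hT hS g v⟩
  exact Submodule.starProjection_comm_of_mapsTo _ (koopman_koopman_inv hT1 hTmul hT g)
    (hmaps g) (hmaps g⁻¹) u

theorem exists_almostPeriodic_pullback_eq_starProjection {u : Lp ℂ 2 μ}
    (hu : AlmostPeriodic T μ u) :
    ∃ v, AlmostPeriodic S ν v ∧
      hπ.pullback v = hπ.pullback.toLinearMap.range.starProjection u := by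
  obtain ⟨v, hv⟩ := hπ.pullback.toLinearMap.range.starProjection_apply_mem u
  refine ⟨v, ?_, hv⟩
  rw [← almostPeriodic_map_iff hπ.pullback.isometry.isClosedEmbedding (pullback_koopman hπ hT hS)]
  rw [← LinearIsometry.coe_toLinearMap, hv]
  exact hu.map (Submodule.starProjection _).continuous (starProjection_koopman hπ hT hS hT1 hTmul)

end IsFactorMap

theorem relatively_independent_joining_is_factor_general
    {G : Type*} [Group G]
    {X : Type*} [MeasurableSpace X]
    {Y : Type*} [MeasurableSpace Y]
    (T : G → X → X) (hT1 : ∀ x, T 1 x = x)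
    (hTmul : ∀ g h x, T (g * h) x = T g (T h x))
    (μX : Measure X)
    (hTμ : ∀ g, MeasurePreserving (T g) μX μX)
    (S : G → Y → Y)
    (μY : Measure Y)
    (hSμ : ∀ g, MeasurePreserving (S g) μY μY)
    (π : X → Y) (hπ : IsFactorMap T S μX μY π) :
    ∀ f h pKXf pYh pKYf pKYh : Lp ℂ 2 μX,
      IsOrthogonalProjectionOnto
        (closure ((Submodule.span ℂ {u : Lp ℂ 2 μX | AlmostPeriodic T μX u} :
          Submodule ℂ (Lp ℂ 2 μX)) : Set (Lp ℂ 2 μX))) f pKXf →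
      IsOrthogonalProjectionOnto
        {u : Lp ℂ 2 μX | ∃ v : Lp ℂ 2 μY, (u : X → ℂ) =ᵐ[μX] fun x => v (π x)} h pYh →
      IsOrthogonalProjectionOnto
        (closure ((Submodule.span ℂ {u : Lp ℂ 2 μX | ∃ v : Lp ℂ 2 μY,
          AlmostPeriodic S μY v ∧ (u : X → ℂ) =ᵐ[μX] fun x => v (π x)} :
          Submodule ℂ (Lp ℂ 2 μX)) : Set (Lp ℂ 2 μX))) f pKYf →
      IsOrthogonalProjectionOnto
        (closure ((Submodule.span ℂ {u : Lp ℂ 2 μX | ∃ v : Lp ℂ 2 μY,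
          AlmostPeriodic S μY v ∧ (u : X → ℂ) =ᵐ[μX] fun x => v (π x)} :
          Submodule ℂ (Lp ℂ 2 μX)) : Set (Lp ℂ 2 μX))) h pKYh →
      (inner ℂ pKXf pYh : ℂ) = inner ℂ pKYf pKYh := by
  intro f h pKXf pYh pKYf pKYh hKX hY hKYf hKYh
  have hYset : {u : Lp ℂ 2 μX | ∃ v : Lp ℂ 2 μY, (u : X → ℂ) =ᵐ[μX] fun x => v (π x)} =
      hπ.pullback.toLinearMap.range := by
    ext u
    simp [← hπ.pullback_eq_iff]
  have hKYset : {u : Lp ℂ 2 μX | ∃ v : Lp ℂ 2 μY,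
      AlmostPeriodic S μY v ∧ (u : X → ℂ) =ᵐ[μX] fun x => v (π x)} =
      hπ.pullback '' {v | AlmostPeriodic S μY v} := by
    ext u
    simp [← hπ.pullback_eq_iff]
  rw [← Submodule.topologicalClosure_coe] at hKX
  rw [hKYset, ← Submodule.topologicalClosure_coe] at hKYf hKYh
  rw [hYset] at hY
  rw [← hKX.starProjection_eq, ← hY.starProjection_eq, ← hKYf.starProjection_eq,
    ← hKYh.starProjection_eq]
  apply Submodule.inner_starProjection_starProjection_eq
  · exact Submodule.topologicalClosure_mono <| Submodule.span_mono <| Set.image_subset_iff.2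
      fun v hv => (almostPeriodic_map_iff hπ.pullback.isometry.isClosedEmbedding
        (hπ.pullback_koopman hTμ hSμ) v).2 hv
  · refine Submodule.topologicalClosure_minimal _
      (Submodule.span_le.2 (Set.image_subset_iff.2 fun v _ => LinearMap.mem_range_self _ v)) ?_
    rw [LinearMap.coe_range]
    exact hπ.pullback.isometry.isClosedEmbedding.isClosed_range
  · exact Submodule.mapsTo_topologicalClosure_span _ fun u hu =>
      hπ.exists_almostPeriodic_pullback_eq_starProjection hTμ hSμ hT1 hTmul hu

/-- Let `π : X → Y` be a factor map of `G` systems.  With `P_KX` the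
orthogonal projection of `L²(X)` onto the closed span of the almost periodic functions of `X`,
`P_Y` the projection onto the image of `L²(Y)`, and `P_KY` the projection onto the closed span
of the pullbacks of the almost periodic functions of `Y`, one has
`⟨P_KX f, P_Y h⟩ = ⟨P_KY f, P_KY h⟩` for all `f, h ∈ L²(X)`. -/
theorem relatively_independent_joining_is_factor
    {G : Type*} [Group G] [Countable G]
    {X : Type*} [MetricSpace X] [CompactSpace X] [MeasurableSpace X] [BorelSpace X]
    {Y : Type*} [MetricSpace Y] [CompactSpace Y] [MeasurableSpace Y] [BorelSpace Y]
    (T : G → X → X) (hT1 : ∀ x, T 1 x = x)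
    (hTmul : ∀ g h x, T (g * h) x = T g (T h x))
    (hTcont : ∀ g, Continuous (T g))
    (μX : Measure X) (hXprob : IsProbabilityMeasure μX)
    (hTμ : ∀ g, MeasurePreserving (T g) μX μX)
    (S : G → Y → Y) (hS1 : ∀ y, S 1 y = y)
    (hSmul : ∀ g h y, S (g * h) y = S g (S h y))
    (hScont : ∀ g, Continuous (S g))
    (μY : Measure Y) (hYprob : IsProbabilityMeasure μY)
    (hSμ : ∀ g, MeasurePreserving (S g) μY μY)
    (π : X → Y) (hπ : IsFactorMap T S μX μY π) :
    ∀ f h pKXf pYh pKYf pKYh : Lp ℂ 2 μX,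
      IsOrthogonalProjectionOnto
        (closure ((Submodule.span ℂ {u : Lp ℂ 2 μX | AlmostPeriodic T μX u} :
          Submodule ℂ (Lp ℂ 2 μX)) : Set (Lp ℂ 2 μX))) f pKXf →
      IsOrthogonalProjectionOnto
        {u : Lp ℂ 2 μX | ∃ v : Lp ℂ 2 μY, (u : X → ℂ) =ᵐ[μX] fun x => v (π x)} h pYh →
      IsOrthogonalProjectionOnto
        (closure ((Submodule.span ℂ {u : Lp ℂ 2 μX | ∃ v : Lp ℂ 2 μY,
          AlmostPeriodic S μY v ∧ (u : X → ℂ) =ᵐ[μX] fun x => v (π x)} :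
          Submodule ℂ (Lp ℂ 2 μX)) : Set (Lp ℂ 2 μX))) f pKYf →
      IsOrthogonalProjectionOnto
        (closure ((Submodule.span ℂ {u : Lp ℂ 2 μX | ∃ v : Lp ℂ 2 μY,
          AlmostPeriodic S μY v ∧ (u : X → ℂ) =ᵐ[μX] fun x => v (π x)} :
          Submodule ℂ (Lp ℂ 2 μX)) : Set (Lp ℂ 2 μX))) h pKYh →
      (inner ℂ pKXf pYh : ℂ) = inner ℂ pKYf pKYh :=
  relatively_independent_joining_is_factor_general T hT1 hTmul μX hTμ S μY hSμ π hπ
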